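/- Let (X, 𝔄, μ) be a σ-finite measure space and S, g : X × ℝ → ℝ measurable such that for all a in an open interval J: exp(−S(·, a)) is μ-integrable with Z(a) = ∫ exp(−S(x,a)) dμ > 0; a ↦ S(x, a) and a ↦ g(x, a) are differentiable for μ-a.e. x; and the functions |∂_a S| e^{−S}, |g| e^{−S}, |∂_a g| e^{−S}, and |g ∂_a S| e^{−S} are dominated uniformly in a ∈ J by μ-integrable functions. Then the map a ↦ Ĩ(a) = E_{Q_a}[g(·, a)] is differentiable on J with derivative Ĩ'(a) = E_{Q_a}[∂_a g(·, a)] − Cov_{Q_a}( g(·, a), ∂_a S(·, a) ), where Cov_{Q}[u, v] = E_Q[uv] − E_Q[u] E_Q[v]. -/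

import Mathlib

/-!
Writing `Z a = ∫ e^{-S(·,a)} dμ` and `N a = ∫ g(·,a) e^{-S(·,a)} dμ`, the Gibbs expectation is
`N a / Z a`. The domination hypotheses allow differentiating both under the integral sign:
`Z' = -∫ ∂ₐS e^{-S}` and `N' = ∫ ∂ₐg e^{-S} - ∫ g ∂ₐS e^{-S}`. The quotient rule
`(N / Z)' = N' / Z - (N / Z) (Z' / Z)` is then exactly `E[∂ₐg] - (E[g ∂ₐS] - E[g] E[∂ₐS])`.
-/

open MeasureTheory Real Filter Topology

section

variable {X : Type*} [MeasurableSpace X] {μ : Measure X}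

theorem aestronglyMeasurable_deriv_of_forall_aestronglyMeasurable {f : X → ℝ → ℝ} {a : ℝ}
    (hf : ∀ b, AEStronglyMeasurable (fun x => f x b) μ)
    (hd : ∀ᵐ x ∂μ, DifferentiableAt ℝ (f x) a) :
    AEStronglyMeasurable (fun x => deriv (f x) a) μ := by
  set t : ℕ → ℝ := fun n => ((n : ℝ) + 1)⁻¹
  have ht : Tendsto t atTop (𝓝[>] 0) :=
    tendsto_inv_atTop_nhdsGT_zero.comp
      (tendsto_atTop_add_const_right _ 1 tendsto_natCast_atTop_atTop)
  refine aestronglyMeasurable_of_tendsto_ae atTop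
    (f := fun n x => (t n)⁻¹ • (f x (a + t n) - f x a))
    (fun n => ((hf (a + t n)).sub (hf a)).const_smul (t n)⁻¹) ?_
  filter_upwards [hd] with x hx
  exact hx.hasDerivAt.tendsto_slope_zero_right.comp ht

theorem integral_withDensity_ofReal_div {ρ : X → ℝ} (hρ : Measurable ρ)
    (hρ_nonneg : ∀ x, 0 ≤ ρ x) {c : ℝ} (hc : 0 ≤ c) (f : X → ℝ) :
    ∫ x, f x ∂μ.withDensity (fun x => ENNReal.ofReal (ρ x / c)) = (∫ x, f x * ρ x ∂μ) / c := by
  rw [← integral_div]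
  refine (integral_withDensity_eq_integral_smul (hρ.div_const c).real_toNNReal f).trans ?_
  congr 1 with x
  rw [NNReal.smul_def, smul_eq_mul, Real.coe_toNNReal _ (div_nonneg (hρ_nonneg x) hc)]
  ring

theorem integrable_mul_of_abs_mul_le {u ρ G : X → ℝ} (hG : Integrable G μ)
    (hu : AEStronglyMeasurable u μ) (hρ : AEStronglyMeasurable ρ μ) (hρ_nonneg : ∀ x, 0 ≤ ρ x)
    (hle : ∀ᵐ x ∂μ, |u x| * ρ x ≤ G x) :
    Integrable (fun x => u x * ρ x) μ := by
  refine hG.mono' (hu.mul hρ) ?_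
  filter_upwards [hle] with x hx
  rwa [norm_mul, Real.norm_eq_abs, Real.norm_eq_abs, abs_of_nonneg (hρ_nonneg x)]

theorem hasDerivAt_integral_mul_exp_neg {S h : X → ℝ → ℝ} {G : X → ℝ} {s : Set ℝ} {a : ℝ}
    (hs : s ∈ 𝓝 a) (hSm : ∀ b, Measurable fun x => S x b)
    (hhm : ∀ b, AEStronglyMeasurable (fun x => h x b) μ)
    (hint : Integrable (fun x => h x a * exp (-S x a)) μ)
    (hSdiff : ∀ᵐ x ∂μ, ∀ b ∈ s, DifferentiableAt ℝ (S x) b)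
    (hhdiff : ∀ᵐ x ∂μ, ∀ b ∈ s, DifferentiableAt ℝ (h x) b) (hG : Integrable G μ)
    (hbound : ∀ᵐ x ∂μ, ∀ b ∈ s,
      |deriv (h x) b| * exp (-S x b) ≤ G x ∧ |h x b * deriv (S x) b| * exp (-S x b) ≤ G x) :
    HasDerivAt (fun b => ∫ x, h x b * exp (-S x b) ∂μ)
      ((∫ x, deriv (h x) a * exp (-S x a) ∂μ) -
        ∫ x, h x a * deriv (S x) a * exp (-S x a) ∂μ) a := by
  have ha : a ∈ s := mem_of_mem_nhds hs
  have hρm : ∀ b, AEStronglyMeasurable (fun x => exp (-S x b)) μ := fun b =>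
    (hSm b).neg.exp.aestronglyMeasurable
  have hdS : AEStronglyMeasurable (fun x => deriv (S x) a) μ :=
    aestronglyMeasurable_deriv_of_forall_aestronglyMeasurable
      (fun b => (hSm b).aestronglyMeasurable) (hSdiff.mono fun x hx => hx a ha)
  have hdh : AEStronglyMeasurable (fun x => deriv (h x) a) μ :=
    aestronglyMeasurable_deriv_of_forall_aestronglyMeasurable hhm
      (hhdiff.mono fun x hx => hx a ha)
  have hint_dh : Integrable (fun x => deriv (h x) a * exp (-S x a)) μ :=
    integrable_mul_of_abs_mul_le hG hdh (hρm a) (fun _ => (exp_pos _).le)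
      (hbound.mono fun x hx => (hx a ha).1)
  have hint_hdS : Integrable (fun x => h x a * deriv (S x) a * exp (-S x a)) μ :=
    integrable_mul_of_abs_mul_le hG ((hhm a).mul hdS) (hρm a) (fun _ => (exp_pos _).le)
      (hbound.mono fun x hx => (hx a ha).2)
  rw [← integral_sub hint_dh hint_hdS]
  refine (hasDerivAt_integral_of_dominated_loc_of_deriv_le
    (F' := fun b x => deriv (h x) b * exp (-S x b) - h x b * deriv (S x) b * exp (-S x b))
    (bound := G + G) hs (.of_forall fun b => (hhm b).mul (hρm b)) hint
    (hdh.mul (hρm a) |>.sub ((hhm a).mul hdS |>.mul (hρm a))) ?_ (hG.add hG) ?_).2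
  · filter_upwards [hbound] with x hx b hb
    rw [← sub_mul, norm_mul, Real.norm_eq_abs, Real.norm_eq_abs, abs_of_pos (exp_pos _)]
    calc |deriv (h x) b - h x b * deriv (S x) b| * exp (-S x b)
        ≤ (|deriv (h x) b| + |h x b * deriv (S x) b|) * exp (-S x b) := by
          gcongr; exact abs_sub _ _
      _ ≤ G x + G x := by rw [add_mul]; exact add_le_add (hx b hb).1 (hx b hb).2
  · filter_upwards [hSdiff, hhdiff] with x hxS hxh b hb
    refine ((hxh b hb).hasDerivAt.mul (hxS b hb).hasDerivAt.neg.exp).congr_deriv ?_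
    simp only [Pi.neg_apply]
    ring

theorem hasDerivAt_integral_exp_neg {S : X → ℝ → ℝ} {G : X → ℝ} {s : Set ℝ} {a : ℝ}
    (hs : s ∈ 𝓝 a) (hSm : ∀ b, Measurable fun x => S x b)
    (hint : Integrable (fun x => exp (-S x a)) μ)
    (hSdiff : ∀ᵐ x ∂μ, ∀ b ∈ s, DifferentiableAt ℝ (S x) b) (hG : Integrable G μ)
    (hbound : ∀ᵐ x ∂μ, ∀ b ∈ s, |deriv (S x) b| * exp (-S x b) ≤ G x) :
    HasDerivAt (fun b => ∫ x, exp (-S x b) ∂μ) (-∫ x, deriv (S x) a * exp (-S x a) ∂μ) a := by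
  have h := hasDerivAt_integral_mul_exp_neg (h := fun _ _ => 1) hs hSm
    (fun _ => aestronglyMeasurable_const) (by simpa using hint) hSdiff
    (.of_forall fun _ _ _ => differentiableAt_const _) hG
    (hbound.mono fun x hx b hb =>
      ⟨by simpa using (by positivity : (0 : ℝ) ≤ _).trans (hx b hb), by simpa using hx b hb⟩)
  simpa only [one_mul, deriv_const', zero_mul, integral_zero, zero_sub] using h

end

theorem gibbs_expectation_gradient_formula_general
    {X : Type*} [MeasurableSpace X] (μ : Measure X)
    (l r : ℝ) (S g : X → ℝ → ℝ)
    (hSm : Measurable fun p : X × ℝ => S p.1 p.2)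
    (hgm : Measurable fun p : X × ℝ => g p.1 p.2)
    (hint : ∀ a ∈ Set.Ioo l r, Integrable (fun x => Real.exp (-S x a)) μ)
    (hZpos : ∀ a ∈ Set.Ioo l r, 0 < ∫ x, Real.exp (-S x a) ∂μ)
    (hSdiff : ∀ᵐ x ∂μ, ∀ a ∈ Set.Ioo l r, DifferentiableAt ℝ (S x) a)
    (hgdiff : ∀ᵐ x ∂μ, ∀ a ∈ Set.Ioo l r, DifferentiableAt ℝ (g x) a)
    (hdom : ∃ G : X → ℝ, Integrable G μ ∧
      ∀ᵐ x ∂μ, ∀ a ∈ Set.Ioo l r,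
        |deriv (S x) a| * Real.exp (-S x a) ≤ G x ∧
        |g x a| * Real.exp (-S x a) ≤ G x ∧
        |deriv (g x) a| * Real.exp (-S x a) ≤ G x ∧
        |g x a * deriv (S x) a| * Real.exp (-S x a) ≤ G x) :
    ∀ a ∈ Set.Ioo l r,
      HasDerivAt
        (fun a' => ∫ x, g x a'
          ∂(μ.withDensity fun x =>
            ENNReal.ofReal (Real.exp (-S x a') / ∫ x', Real.exp (-S x' a') ∂μ)))
        ((∫ x, deriv (g x) a
            ∂(μ.withDensity fun x =>
              ENNReal.ofReal (Real.exp (-S x a) / ∫ x', Real.exp (-S x' a) ∂μ))) -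
          ((∫ x, g x a * deriv (S x) a
              ∂(μ.withDensity fun x =>
                ENNReal.ofReal (Real.exp (-S x a) / ∫ x', Real.exp (-S x' a) ∂μ))) -
            (∫ x, g x a
              ∂(μ.withDensity fun x =>
                ENNReal.ofReal (Real.exp (-S x a) / ∫ x', Real.exp (-S x' a) ∂μ))) *
            (∫ x, deriv (S x) a
              ∂(μ.withDensity fun x =>
                ENNReal.ofReal (Real.exp (-S x a) / ∫ x', Real.exp (-S x' a) ∂μ)))))
        a := by
  intro a ha
  have hSm' : ∀ b, Measurable fun x => S x b := fun b => hSm.comp measurable_prodMk_right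
  have hgm' : ∀ b, Measurable fun x => g x b := fun b => hgm.comp measurable_prodMk_right
  obtain ⟨G, hG, hbound⟩ := hdom
  have hs : Set.Ioo l r ∈ 𝓝 a := isOpen_Ioo.mem_nhds ha
  have hZ := hasDerivAt_integral_exp_neg hs hSm' (hint a ha) hSdiff hG
    (hbound.mono fun x hx b hb => (hx b hb).1)
  have hN := hasDerivAt_integral_mul_exp_neg hs hSm' (fun b => (hgm' b).aestronglyMeasurable)
    (integrable_mul_of_abs_mul_le hG (hgm' a).aestronglyMeasurable
      (hSm' a).neg.exp.aestronglyMeasurable (fun _ => (exp_pos _).le)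
      (hbound.mono fun x hx => (hx a ha).2.1))
    hSdiff hgdiff hG (hbound.mono fun x hx b hb => (hx b hb).2.2)
  have hQ : ∀ (b : ℝ) (f : X → ℝ), ∫ x, f x ∂(μ.withDensity fun x =>
      ENNReal.ofReal (exp (-S x b) / ∫ x', exp (-S x' b) ∂μ)) =
      (∫ x, f x * exp (-S x b) ∂μ) / ∫ x', exp (-S x' b) ∂μ := fun b f =>
    integral_withDensity_ofReal_div (hSm' b).neg.exp (fun _ => (exp_pos _).le)
      (integral_nonneg fun _ => (exp_pos _).le) f
  simp only [hQ]
  have hZne := (hZpos a ha).ne'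
  refine (hN.div hZ hZne).congr_deriv ?_
  field_simp
  ring

/-- **Gradient (covariance) formula for Gibbs expectations.**
Let `(X, 𝔄, μ)` be σ-finite and `S, g : X × ℝ → ℝ` measurable such that for all
`a` in an open interval `J = (l, r)`: `exp (-S(·,a))` is integrable with
`Z a = ∫ exp (-S x a) dμ > 0`; `a ↦ S x a` and `a ↦ g x a` are differentiable
for a.e. `x`; and `|∂ₐS| e^{-S}`, `|g| e^{-S}`, `|∂ₐg| e^{-S}`, `|g ∂ₐS| e^{-S}`
are dominated uniformly in `a ∈ J` by integrable functions. Then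
`Ĩ(a) = E_{Q_a}[g(·,a)]` is differentiable on `J` with
`Ĩ'(a) = E_{Q_a}[∂ₐg(·,a)] - Cov_{Q_a}(g(·,a), ∂ₐS(·,a))`,
where `Q_a = μ.withDensity (exp (-S(·,a))/Z a)` and
`Cov_Q[u,v] = E_Q[uv] - E_Q[u] E_Q[v]`. -/
theorem gibbs_expectation_gradient_formula
    {X : Type*} [MeasurableSpace X] (μ : Measure X) [SigmaFinite μ]
    (l r : ℝ) (S g : X → ℝ → ℝ)
    (hSm : Measurable fun p : X × ℝ => S p.1 p.2)
    (hgm : Measurable fun p : X × ℝ => g p.1 p.2)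
    (hint : ∀ a ∈ Set.Ioo l r, Integrable (fun x => Real.exp (-S x a)) μ)
    (hZpos : ∀ a ∈ Set.Ioo l r, 0 < ∫ x, Real.exp (-S x a) ∂μ)
    (hSdiff : ∀ᵐ x ∂μ, ∀ a ∈ Set.Ioo l r, DifferentiableAt ℝ (S x) a)
    (hgdiff : ∀ᵐ x ∂μ, ∀ a ∈ Set.Ioo l r, DifferentiableAt ℝ (g x) a)
    (hdom : ∃ G : X → ℝ, Integrable G μ ∧
      ∀ᵐ x ∂μ, ∀ a ∈ Set.Ioo l r,
        |deriv (S x) a| * Real.exp (-S x a) ≤ G x ∧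
        |g x a| * Real.exp (-S x a) ≤ G x ∧
        |deriv (g x) a| * Real.exp (-S x a) ≤ G x ∧
        |g x a * deriv (S x) a| * Real.exp (-S x a) ≤ G x) :
    ∀ a ∈ Set.Ioo l r,
      HasDerivAt
        (fun a' => ∫ x, g x a'
          ∂(μ.withDensity fun x =>
            ENNReal.ofReal (Real.exp (-S x a') / ∫ x', Real.exp (-S x' a') ∂μ)))
        ((∫ x, deriv (g x) a
            ∂(μ.withDensity fun x =>
              ENNReal.ofReal (Real.exp (-S x a) / ∫ x', Real.exp (-S x' a) ∂μ))) -
          ((∫ x, g x a * deriv (S x) a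
              ∂(μ.withDensity fun x =>
                ENNReal.ofReal (Real.exp (-S x a) / ∫ x', Real.exp (-S x' a) ∂μ))) -
            (∫ x, g x a
              ∂(μ.withDensity fun x =>
                ENNReal.ofReal (Real.exp (-S x a) / ∫ x', Real.exp (-S x' a) ∂μ))) *
            (∫ x, deriv (S x) a
              ∂(μ.withDensity fun x =>
                ENNReal.ofReal (Real.exp (-S x a) / ∫ x', Real.exp (-S x' a) ∂μ)))))
        a :=
  gibbs_expectation_gradient_formula_general μ l r S g hSm hgm hint hZpos hSdiff hgdiff hdom
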